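/- Let Δ > 0. Then for all real i ≤ −1 and all real r with 0 ≤ r < Δ, the first-order Taylor remainder of Φ⁻ satisfies 0 ≤ −E⁻(i, r) ≤ −E⁻(−1, Δ); in particular |Φ⁻(i − r) − (Φ⁻(i) − r·(Φ⁻)'(i))| ≤ −(Φ⁻(−1 − Δ) − Φ⁻(−1) + Δ·(Φ⁻)'(−1)). -/

import Mathlib

/-! `-E⁻(i, r) = Φ⁻(i) - Φ⁻(i - r) - r (Φ⁻)'(i)` is the gap between the tangent line of `Φ⁻`
at `i` and `Φ⁻` itself. On `(-∞, 0)` both `Φ⁻` and `(Φ⁻)'` have antitone derivatives. The first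
fact makes the gap nonnegative and increasing in `r`, since its `r`-derivative is
`(Φ⁻)'(i - r) - (Φ⁻)'(i) ≥ 0`. Its `i`-derivative is the same kind of gap for `(Φ⁻)'` in place
of `Φ⁻`, so by the second fact the gap is also increasing in `i`, hence maximal at `i = -1`. -/

open Real Set

/-- Φ⁻(x) = log₂(1 − 2^x) -/
noncomputable def Phim (x : ℝ) : ℝ := Real.logb 2 (1 - (2:ℝ) ^ x)

/-- (Φ⁻)'(x) = −2^x / (1 − 2^x) -/
noncomputable def dPhim (x : ℝ) : ℝ := -(2:ℝ) ^ x / (1 - (2:ℝ) ^ x)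

/-- First-order Taylor remainder E⁻(i, r) = Φ⁻(i − r) − Φ⁻(i) + r·(Φ⁻)'(i) -/
noncomputable def Em (i r : ℝ) : ℝ := Phim (i - r) - Phim i + r * dPhim i

theorem monotoneOn_tangent_gap_of_antitoneOn_deriv {f f' : ℝ → ℝ} {a i : ℝ}
    (hf : ∀ x < a, HasDerivAt f (f' x) x) (hf' : AntitoneOn f' (Iio a)) (hi : i < a) :
    MonotoneOn (fun t => f i - f (i - t) - t * f' i) (Ici 0) := by
  have hder : ∀ t ∈ Ici (0 : ℝ),
      HasDerivAt (fun t => f i - f (i - t) - t * f' i) (f' (i - t) - f' i) t := by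
    intro t ht
    have hit : i - t < a := by linarith [mem_Ici.1 ht]
    have hcomp := (hf _ hit).comp t ((hasDerivAt_id t).const_sub i)
    exact ((hcomp.const_sub (f i)).sub ((hasDerivAt_id t).mul_const (f' i))).congr_deriv (by ring)
  refine monotoneOn_of_hasDerivWithinAt_nonneg (convex_Ici 0)
    (fun t ht => (hder t ht).continuousAt.continuousWithinAt)
    (fun t ht => (hder t (interior_subset ht)).hasDerivWithinAt) fun t ht => ?_
  rw [interior_Ici, mem_Ioi] at ht
  exact sub_nonneg.2 (hf' (mem_Iio.2 (by linarith)) (mem_Iio.2 hi) (by linarith))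

theorem tangent_gap_nonneg_of_antitoneOn_deriv {f f' : ℝ → ℝ} {a i t : ℝ}
    (hf : ∀ x < a, HasDerivAt f (f' x) x) (hf' : AntitoneOn f' (Iio a)) (hi : i < a)
    (ht : 0 ≤ t) : 0 ≤ f i - f (i - t) - t * f' i := by
  simpa using monotoneOn_tangent_gap_of_antitoneOn_deriv hf hf' hi self_mem_Ici ht ht

theorem monotoneOn_div_one_sub_pow (n : ℕ) : MonotoneOn (fun u : ℝ => u / (1 - u) ^ n) (Ico 0 1) :=
  fun _ _ v hv huv => div_le_div₀ hv.1 huv (pow_pos (by linarith [hv.2]) n)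
    (pow_le_pow_left₀ (by linarith [hv.2]) (by linarith) n)

theorem two_rpow_mem_Ico {x : ℝ} (hx : x < 0) : (2 : ℝ) ^ x ∈ Ico 0 1 :=
  ⟨(rpow_pos_of_pos two_pos x).le, rpow_lt_one_of_one_lt_of_neg one_lt_two hx⟩

theorem one_sub_two_rpow_pos {x : ℝ} (hx : x < 0) : 0 < 1 - (2 : ℝ) ^ x :=
  sub_pos.2 (two_rpow_mem_Ico hx).2

noncomputable def ddPhim (x : ℝ) : ℝ := -((2 : ℝ) ^ x * log 2) / (1 - (2 : ℝ) ^ x) ^ 2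

theorem hasDerivAt_Phim {x : ℝ} (hx : x < 0) : HasDerivAt Phim (dPhim x) x := by
  have hinner := ((hasStrictDerivAt_const_rpow two_pos x).hasDerivAt).const_sub 1
  refine ((hinner.log (one_sub_two_rpow_pos hx).ne').div_const (log 2)).congr_deriv ?_
  have hlog2 : log 2 ≠ 0 := (log_pos one_lt_two).ne'
  rw [dPhim]
  field_simp

theorem hasDerivAt_dPhim {x : ℝ} (hx : x < 0) : HasDerivAt dPhim (ddPhim x) x := by
  have hpow := (hasStrictDerivAt_const_rpow two_pos x).hasDerivAt
  refine (hpow.neg.div (hpow.const_sub 1) (one_sub_two_rpow_pos hx).ne').congr_deriv ?_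
  rw [ddPhim, Pi.neg_apply]
  field_simp
  ring

theorem antitoneOn_dPhim : AntitoneOn dPhim (Iio 0) := by
  intro x hx y hy hxy
  have h := monotoneOn_div_one_sub_pow 1 (two_rpow_mem_Ico hx) (two_rpow_mem_Ico hy)
    (monotone_rpow_of_base_ge_one one_le_two hxy)
  simp only [pow_one] at h
  simp only [dPhim, neg_div]
  linarith

theorem antitoneOn_ddPhim : AntitoneOn ddPhim (Iio 0) := by
  intro x hx y hy hxy
  have h := monotoneOn_div_one_sub_pow 2 (two_rpow_mem_Ico hx) (two_rpow_mem_Ico hy)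
    (monotone_rpow_of_base_ge_one one_le_two hxy)
  have hform : ∀ z, ddPhim z = -(log 2 * ((2 : ℝ) ^ z / (1 - (2 : ℝ) ^ z) ^ 2)) := fun z => by
    simp only [ddPhim]; ring
  rw [hform, hform]
  exact neg_le_neg (mul_le_mul_of_nonneg_left h (log_pos one_lt_two).le)

theorem neg_Em_eq (i r : ℝ) : -Em i r = Phim i - Phim (i - r) - r * dPhim i := by
  simp only [Em]; ring

theorem neg_Em_nonneg {i r : ℝ} (hi : i < 0) (hr : 0 ≤ r) : 0 ≤ -Em i r := by
  rw [neg_Em_eq]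
  exact tangent_gap_nonneg_of_antitoneOn_deriv (fun _ => hasDerivAt_Phim) antitoneOn_dPhim hi hr

theorem monotoneOn_neg_Em_right {i : ℝ} (hi : i < 0) : MonotoneOn (fun r => -Em i r) (Ici 0) := by
  simpa only [neg_Em_eq] using
    monotoneOn_tangent_gap_of_antitoneOn_deriv (fun _ => hasDerivAt_Phim) antitoneOn_dPhim hi

theorem monotoneOn_neg_Em_left {Δ : ℝ} (hΔ : 0 ≤ Δ) : MonotoneOn (fun i => -Em i Δ) (Iio 0) := by
  have hder : ∀ i ∈ Iio (0 : ℝ), HasDerivAt (fun i => -Em i Δ)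
      (dPhim i - dPhim (i - Δ) - Δ * ddPhim i) i := by
    intro i hi
    have hiΔ : i - Δ < 0 := by linarith [mem_Iio.1 hi]
    have hshift := (hasDerivAt_Phim hiΔ).comp i ((hasDerivAt_id i).sub_const Δ)
    simp only [neg_Em_eq]
    exact (((hasDerivAt_Phim hi).sub hshift).sub ((hasDerivAt_dPhim hi).const_mul Δ)).congr_deriv
      (by ring)
  refine monotoneOn_of_hasDerivWithinAt_nonneg (convex_Iio 0)
    (fun i hi => (hder i hi).continuousAt.continuousWithinAt)
    (fun i hi => (hder i (interior_subset hi)).hasDerivWithinAt) fun i hi => ?_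
  rw [interior_Iio] at hi
  exact tangent_gap_nonneg_of_antitoneOn_deriv (fun _ => hasDerivAt_dPhim) antitoneOn_ddPhim hi hΔ

theorem stmt_2 (Δ : ℝ) (hΔ : 0 < Δ) :
    ∀ i : ℝ, i ≤ -1 → ∀ r : ℝ, 0 ≤ r → r < Δ →
      0 ≤ -Em i r ∧ -Em i r ≤ -Em (-1) Δ ∧
      |Phim (i - r) - (Phim i - r * dPhim i)| ≤
        -(Phim (-1 - Δ) - Phim (-1) + Δ * dPhim (-1)) := by
  intro i hi r hr hrΔ
  have hi0 : i < 0 := by linarith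
  have hnonneg := neg_Em_nonneg hi0 hr
  have hbound : -Em i r ≤ -Em (-1) Δ :=
    (monotoneOn_neg_Em_right hi0 hr hΔ.le hrΔ.le).trans
      (monotoneOn_neg_Em_left hΔ.le hi0 (by norm_num : (-1 : ℝ) ∈ Iio 0) hi)
  refine ⟨hnonneg, hbound, ?_⟩
  have hEm : Phim (i - r) - (Phim i - r * dPhim i) = Em i r := by simp only [Em]; ring
  rw [hEm, abs_of_nonpos (by linarith)]
  exact hbound
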